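/- Let T_t(x) = x + t X(x), X ∈ C¹, and at a fixed point let ν be the unit normal with tangential projection P = I − ν⊗ν. Define A(t)^⊤ = (∂T_t)^{-1}(I − ν^t ⊗ ν^t) where ν^t = (∂T_t)^{-⊤}ν/‖(∂T_t)^{-⊤}ν‖. Then A(0)^⊤ = I − ν⊗ν and d/dt A(t)^⊤|_{t=0} = −∂X(I − ν⊗ν) + (∂^S X)^⊤ν ⊗ ν + ν ⊗ (∂^S X)^⊤ν, where ∂^S X := ∂X (I − ν⊗ν). -/

import Mathlib

open Matrix

attribute [local instance] Matrix.normedAddCommGroup Matrix.normedSpace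

/-- Euclidean norm on `Fin d → ℝ`. -/
noncomputable def nrm {d : ℕ} (v : Fin d → ℝ) : ℝ := Real.sqrt (v ⬝ᵥ v)

/-!
Write `N t = (1 + t B)⁻¹`. From `N t - 1 = -t N t B` and continuity of the inverse, `N' 0 = -B`.
The unnormalised normal `w t = N tᵀ ν = ν ᵥ* N t` therefore has `w' 0 = -Bᵀ ν`, and
`ν^t ⊗ ν^t = (w ⬝ w)⁻¹ w ⊗ w` is the projector onto the line of `w`. At a unit vector `ν` the
radial part of `w'` drops out of its derivative, which is `P w' ⊗ ν + ν ⊗ P w'` with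
`P = 1 - ν ⊗ ν`. The product rule applied to `N t (1 - ν^t ⊗ ν^t)` gives the formula, since
`(∂^S X)ᵀ ν = P Bᵀ ν`.
-/

open Filter Topology

section MatrixCalculus

variable {𝕜 : Type*} [NontriviallyNormedField 𝕜] {l m n : Type*} {x : 𝕜}

theorem hasDerivAt_matrix_iff [Fintype n] {f : 𝕜 → Matrix m n 𝕜} {f' : Matrix m n 𝕜} :
    HasDerivAt f f' x ↔ ∀ i j, HasDerivAt (fun t => f t i j) (f' i j) x :=
  ⟨fun h i j => hasDerivAt_pi.1 (hasDerivAt_pi.1 h i) j,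
    fun h => hasDerivAt_pi.2 fun i => hasDerivAt_pi.2 (h i)⟩

theorem HasDerivAt.dotProduct [Fintype m] {u v : 𝕜 → m → 𝕜} {u' v' : m → 𝕜}
    (hu : HasDerivAt u u' x) (hv : HasDerivAt v v' x) :
    HasDerivAt (fun t => u t ⬝ᵥ v t) (u' ⬝ᵥ v x + u x ⬝ᵥ v') x := by
  simp only [_root_.dotProduct, ← Finset.sum_add_distrib]
  exact .fun_sum fun i _ => (hasDerivAt_pi.1 hu i).mul (hasDerivAt_pi.1 hv i)

theorem HasDerivAt.matrix_mul [Fintype m] [Fintype n] {f : 𝕜 → Matrix l m 𝕜}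
    {g : 𝕜 → Matrix m n 𝕜} {f' : Matrix l m 𝕜} {g' : Matrix m n 𝕜} (hf : HasDerivAt f f' x)
    (hg : HasDerivAt g g' x) :
    HasDerivAt (fun t => f t * g t) (f' * g x + f x * g') x := by
  refine hasDerivAt_matrix_iff.2 fun i k => ?_
  simp only [Matrix.add_apply, mul_apply']
  exact (hasDerivAt_pi.1 hf i).dotProduct
    (hasDerivAt_pi.2 fun j => hasDerivAt_matrix_iff.1 hg j k)

theorem HasDerivAt.vecMul [Fintype m] [Fintype n] {v : 𝕜 → m → 𝕜} {f : 𝕜 → Matrix m n 𝕜}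
    {v' : m → 𝕜} {f' : Matrix m n 𝕜} (hv : HasDerivAt v v' x) (hf : HasDerivAt f f' x) :
    HasDerivAt (fun t => v t ᵥ* f t) (v' ᵥ* f x + v x ᵥ* f') x :=
  hasDerivAt_pi.2 fun j =>
    hv.dotProduct (hasDerivAt_pi.2 fun i => hasDerivAt_matrix_iff.1 hf i j)

theorem HasDerivAt.vecMulVec [Fintype n] {u : 𝕜 → m → 𝕜} {v : 𝕜 → n → 𝕜} {u' : m → 𝕜}
    {v' : n → 𝕜} (hu : HasDerivAt u u' x) (hv : HasDerivAt v v' x) :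
    HasDerivAt (fun t => vecMulVec (u t) (v t)) (vecMulVec u' (v x) + vecMulVec (u x) v') x :=
  hasDerivAt_matrix_iff.2 fun i j => by
    simpa only [Matrix.add_apply, vecMulVec_apply] using
      (hasDerivAt_pi.1 hu i).fun_mul (hasDerivAt_pi.1 hv j)

theorem hasDerivAt_inv_one_add_smul [Fintype n] [DecidableEq n] (B : Matrix n n 𝕜) :
    HasDerivAt (fun t : 𝕜 => (1 + t • B)⁻¹) (-B) 0 := by
  have hM : Continuous fun t : 𝕜 => (1 : Matrix n n 𝕜) + t • B := by fun_prop
  have hdet : ∀ᶠ t in 𝓝 (0 : 𝕜), IsUnit (1 + t • B).det := by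
    refine (hM.matrix_det.continuousAt.eventually_ne ?_).mono fun t ht => ht.isUnit
    simp
  have hinv : ContinuousAt (fun t : 𝕜 => (1 + t • B)⁻¹) 0 := by
    refine (continuousAt_matrix_inv _ ?_).comp hM.continuousAt
    rw [zero_smul, add_zero, det_one, Ring.inverse_eq_inv']
    exact continuousAt_inv₀ one_ne_zero
  have hslope : slope (fun t : 𝕜 => (1 + t • B)⁻¹) 0 =ᶠ[𝓝[≠] 0]
      fun t => -((1 + t • B)⁻¹ * B) := by
    filter_upwards [nhdsWithin_le_nhds hdet, self_mem_nhdsWithin] with t ht ht0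
    have hsub : (1 + t • B)⁻¹ - 1 = -t • ((1 + t • B)⁻¹ * B) :=
      calc (1 + t • B)⁻¹ - 1 = (1 + t • B)⁻¹ - (1 + t • B)⁻¹ * (1 + t • B) := by
            rw [nonsing_inv_mul _ ht]
        _ = -t • ((1 + t • B)⁻¹ * B) := by
            rw [mul_add, mul_one, mul_smul_comm, neg_smul]; abel
    rw [slope_def_module, zero_smul, add_zero, inv_one, sub_zero, hsub, smul_smul, mul_neg,
      inv_mul_cancel₀ ht0, neg_smul, one_smul]
  refine hasDerivAt_iff_tendsto_slope.2 ((tendsto_congr' hslope).2 ?_)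
  have hlim : Tendsto (fun t : 𝕜 => -((1 + t • B)⁻¹ * B)) (𝓝 0)
      (𝓝 (-((1 + (0 : 𝕜) • B)⁻¹ * B))) := (hinv.tendsto.mul_const B).neg
  rw [zero_smul, add_zero, inv_one, one_mul] at hlim
  exact hlim.mono_left nhdsWithin_le_nhds

def lineProj [Fintype m] (w : m → 𝕜) : Matrix m m 𝕜 := (w ⬝ᵥ w)⁻¹ • vecMulVec w w

theorem hasDerivAt_lineProj [Fintype m] [DecidableEq m] {w : 𝕜 → m → 𝕜} {ν u : m → 𝕜}
    (hw : HasDerivAt w u x) (hwx : w x = ν) (hν : ν ⬝ᵥ ν = 1) :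
    HasDerivAt (fun t => lineProj (w t))
      (vecMulVec (u ᵥ* (1 - vecMulVec ν ν)) ν + vecMulVec ν (u ᵥ* (1 - vecMulVec ν ν))) x := by
  have hsq := hw.dotProduct hw
  rw [hwx, dotProduct_comm u ν] at hsq
  have hinv := hsq.inv (by rw [hwx, hν]; exact one_ne_zero)
  refine (hinv.smul (hw.vecMulVec hw)).congr_deriv ?_
  simp only [Pi.inv_apply, hwx, hν, inv_one, one_smul, one_pow, div_one, vecMul_sub, vecMul_one,
    vecMul_vecMulVec, sub_vecMulVec, vecMulVec_sub, smul_vecMulVec, vecMulVec_smul,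
    dotProduct_comm u ν]
  module

end MatrixCalculus

theorem vecMulVec_inv_nrm_smul_self {d : ℕ} (v : Fin d → ℝ) :
    vecMulVec ((nrm v)⁻¹ • v) ((nrm v)⁻¹ • v) = lineProj v := by
  rw [lineProj, smul_vecMulVec, vecMulVec_smul, smul_smul, ← mul_inv, nrm,
    Real.mul_self_sqrt (by simpa using dotProduct_self_star_nonneg v)]

theorem stmt10 (B : Matrix (Fin 3) (Fin 3) ℝ) (ν : Fin 3 → ℝ) (hν : ν ⬝ᵥ ν = 1)
    (A : ℝ → Matrix (Fin 3) (Fin 3) ℝ)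
    (hA : ∀ t, A t = (1 + t • B)⁻¹ *
      (1 - vecMulVec ((nrm (((1 + t • B)ᵀ)⁻¹ *ᵥ ν))⁻¹ • (((1 + t • B)ᵀ)⁻¹ *ᵥ ν))
                     ((nrm (((1 + t • B)ᵀ)⁻¹ *ᵥ ν))⁻¹ • (((1 + t • B)ᵀ)⁻¹ *ᵥ ν)))) :
    A 0 = 1 - vecMulVec ν ν ∧
    HasDerivAt A (-(B * (1 - vecMulVec ν ν))
      + vecMulVec ((B * (1 - vecMulVec ν ν))ᵀ *ᵥ ν) ν
      + vecMulVec ν ((B * (1 - vecMulVec ν ν))ᵀ *ᵥ ν)) 0 := by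
  have hA' : A = fun t => (1 + t • B)⁻¹ * (1 - lineProj (ν ᵥ* (1 + t • B)⁻¹)) := by
    funext t
    rw [hA, ← transpose_nonsing_inv, mulVec_transpose, vecMulVec_inv_nrm_smul_self]
  have hN0 : (1 + (0 : ℝ) • B)⁻¹ = 1 := by simp
  have hP0 : lineProj ν = vecMulVec ν ν := by simp [lineProj, hν]
  have hw := (hasDerivAt_const (0 : ℝ) ν).vecMul (hasDerivAt_inv_one_add_smul B)
  rw [hN0, vecMul_one, zero_add, vecMul_neg] at hw
  have hP := hasDerivAt_lineProj hw (by rw [hN0, vecMul_one]) hν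
  subst hA'
  constructor
  · simp only [hN0, vecMul_one, hP0, one_mul]
  refine ((hasDerivAt_inv_one_add_smul B).matrix_mul (hP.const_sub 1)).congr_deriv ?_
  rw [hN0, vecMul_one, hP0, one_mul, neg_mul, mulVec_transpose, ← vecMul_vecMul, neg_vecMul,
    neg_vecMulVec, vecMulVec_neg]
  abel
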